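/- arXiv:math/0310084 — 4 statements merged into one kernel-verified Lean document; each statement's English description precedes it below -/
import Mathlib

section
/- Let B be a negative definite symmetric integer matrix indexed by a finite set J, with B_{ij} ≥ 0 for i ≠ j, and suppose the associated graph is connected (i.e., B is irreducible). Then all entries of B^{-1} are strictly negative. -/
open Matrix

variable {J : Type*}

/-- The rational bilinear (intersection) form associated with the integral matrix `B`. -/
def bform [Fintype J] (B : Matrix J J ℤ) (x y : J → ℚ) : ℚ :=
  x ⬝ᵥ (B.map (fun n => (n : ℚ))).mulVec y

/-- `B` is negative definite as a rational quadratic form. -/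
def NegDef [Fintype J] (B : Matrix J J ℤ) : Prop :=
  ∀ x : J → ℚ, x ≠ 0 → bform B x x < 0

/-- Membership in the lattice `L` (integral coordinates in the basis `E_j`). -/
def isLat (x : J → ℚ) : Prop := ∀ j, ∃ m : ℤ, x j = (m : ℚ)

/-- Membership in the dual lattice `L' ⊂ L ⊗ ℚ`. -/
def isDual [Fintype J] [DecidableEq J] (B : Matrix J J ℤ) (x : J → ℚ) : Prop :=
  ∀ j, ∃ m : ℤ, bform B x (Pi.single j 1) = (m : ℚ)

/-- Membership in the anti-nef cone `NE_ℚ = {x : (x,E_j) ≥ 0 ∀ j}`. -/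
def inNE [Fintype J] [DecidableEq J] (B : Matrix J J ℤ) (x : J → ℚ) : Prop :=
  ∀ j, 0 ≤ bform B x (Pi.single j 1)

/-- Effective rational cycles: all coordinates nonnegative. -/
def Effective (x : J → ℚ) : Prop := ∀ j, 0 ≤ x j

/-- `χ(x) = -(x, x+K)/2` (Riemann–Roch). -/
def chi [Fintype J] (B : Matrix J J ℤ) (K x : J → ℚ) : ℚ := -(bform B x (x + K)) / 2

/-! The classical M-matrix argument. Let `B` be negative definite with nonnegative off-diagonal
entries and `B x ≥ 0`. Writing `x = x⁺ - x⁻`, we get `(x⁺, B x⁺) = (x⁺, B x) + (x⁺, B x⁻) ≥ 0`, since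
`x⁺` and `x⁻` have disjoint supports; hence `x⁺ = 0`, i.e. `x ≤ 0`. At a zero `a` of `x`, `(B x)_a` is
a sum of nonpositive terms, so they all vanish and the zeros of `x` are closed under adjacency in
the graph of `B`. If that graph is connected and `B x ≠ 0`, a zero of `x` would thus force
`(B x)_j ≤ 0` at a `j` where `(B x)_j > 0`. Apply this to the columns `x = B⁻¹ e_j`. -/

namespace Matrix

section Metzler

variable {R : Type*} [CommRing R] [LinearOrder R] [IsStrictOrderedRing R] {B : Matrix J J R}

lemma mul_apply_nonpos_of_apply_eq_zero (hoff : ∀ i j, i ≠ j → 0 ≤ B i j) {x : J → R}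
    (hx : x ≤ 0) {a : J} (ha : x a = 0) (k : J) : B a k * x k ≤ 0 := by
  rcases eq_or_ne a k with rfl | hak
  · simp [ha]
  · exact mul_nonpos_of_nonneg_of_nonpos (hoff a k hak) (hx k)

variable [Fintype J]

lemma dotProduct_mulVec_nonneg_of_mul_eq_zero (hoff : ∀ i j, i ≠ j → 0 ≤ B i j) {y z : J → R}
    (hy : 0 ≤ y) (hz : 0 ≤ z) (hyz : ∀ k, y k * z k = 0) : 0 ≤ y ⬝ᵥ B *ᵥ z := by
  simp only [dotProduct, mulVec, Finset.mul_sum]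
  refine Finset.sum_nonneg fun k _ => Finset.sum_nonneg fun l _ => ?_
  rcases eq_or_ne k l with rfl | hkl
  · rw [mul_left_comm, hyz, mul_zero]
  · exact mul_nonneg (hy k) (mul_nonneg (hoff k l hkl) (hz l))

lemma nonpos_of_mulVec_nonneg (hneg : ∀ x ≠ 0, x ⬝ᵥ B *ᵥ x < 0)
    (hoff : ∀ i j, i ≠ j → 0 ≤ B i j) {x : J → R} (hx : 0 ≤ B *ᵥ x) : x ≤ 0 := by
  have hdisj : ∀ k, x⁺ k * x⁻ k = 0 := fun k => by
    rcases le_total (x k) 0 with h | h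
    · simp [posPart_of_nonpos h]
    · simp [negPart_of_nonneg h]
  have hsplit : x⁺ ⬝ᵥ B *ᵥ x⁺ = x⁺ ⬝ᵥ B *ᵥ x + x⁺ ⬝ᵥ B *ᵥ x⁻ := by
    rw [← dotProduct_add, ← mulVec_add, ← sub_eq_iff_eq_add.mp (posPart_sub_negPart x)]
  have hquad : 0 ≤ x⁺ ⬝ᵥ B *ᵥ x⁺ := hsplit ▸ add_nonneg
    (Finset.sum_nonneg fun k _ => mul_nonneg (posPart_nonneg x k) (hx k))
    (dotProduct_mulVec_nonneg_of_mul_eq_zero hoff (posPart_nonneg x) (negPart_nonneg x) hdisj)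
  by_contra h
  exact (hneg _ (mt posPart_eq_zero.mp h)).not_ge hquad

lemma mulVec_apply_nonpos_of_apply_eq_zero (hoff : ∀ i j, i ≠ j → 0 ≤ B i j) {x : J → R}
    (hx : x ≤ 0) {a : J} (ha : x a = 0) : (B *ᵥ x) a ≤ 0 :=
  Finset.sum_nonpos fun k _ => mul_apply_nonpos_of_apply_eq_zero hoff hx ha k

lemma apply_eq_zero_of_mulVec_apply_nonneg (hoff : ∀ i j, i ≠ j → 0 ≤ B i j) {x : J → R}
    (hx : x ≤ 0) {a b : J} (ha : x a = 0) (hBx : 0 ≤ (B *ᵥ x) a) (hab : B a b ≠ 0) :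
    x b = 0 := by
  have hsum : ∑ k, B a k * x k = 0 :=
    le_antisymm (mulVec_apply_nonpos_of_apply_eq_zero hoff hx ha) hBx
  have := (Finset.sum_eq_zero_iff_of_nonpos fun k _ =>
    mul_apply_nonpos_of_apply_eq_zero hoff hx ha k).mp hsum b (Finset.mem_univ b)
  exact (mul_eq_zero.mp this).resolve_left hab

lemma neg_of_mulVec_nonneg (hneg : ∀ x ≠ 0, x ⬝ᵥ B *ᵥ x < 0)
    (hoff : ∀ i j, i ≠ j → 0 ≤ B i j) {G : SimpleGraph J} (hG : G.Connected)
    (hadj : ∀ a b, G.Adj a b → B a b ≠ 0) {x : J → R} (hx : 0 ≤ B *ᵥ x) (hx0 : B *ᵥ x ≠ 0)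
    (i : J) : x i < 0 := by
  have hxn := nonpos_of_mulVec_nonneg hneg hoff hx
  obtain ⟨j, hj⟩ := Function.ne_iff.mp hx0
  refine (hxn i).lt_of_ne fun hi => hj ?_
  have hxj : x j = 0 := by
    clear hj
    induction (SimpleGraph.reachable_iff_reflTransGen i j).mp (hG.preconnected i j) with
    | refl => exact hi
    | tail _ hab ih => exact apply_eq_zero_of_mulVec_apply_nonneg hoff hxn ih (hx _) (hadj _ _ hab)
  exact le_antisymm (mulVec_apply_nonpos_of_apply_eq_zero hoff hxn hxj) (hx j)

end Metzler

lemma det_ne_zero_of_dotProduct_mulVec_ne_zero {A : Type*} [Fintype J] [DecidableEq J]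
    [CommRing A] [IsDomain A] {B : Matrix J J A} (hB : ∀ x ≠ 0, x ⬝ᵥ B *ᵥ x ≠ 0) :
    B.det ≠ 0 := fun h => by
  obtain ⟨x, hx, hBx⟩ := exists_mulVec_eq_zero_iff.mpr h
  exact hB x hx (by rw [hBx, dotProduct_zero])

end Matrix

theorem stmt0_general {J : Type*} [Fintype J] [DecidableEq J]
    (B : Matrix J J ℤ)
    (hsym : B.IsSymm)
    (hneg : NegDef B)
    (hoff : ∀ i j, i ≠ j → 0 ≤ B i j)
    (hconn : (SimpleGraph.fromRel (fun i j => B i j ≠ 0)).Connected) :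
    ∀ i j, (B.map (fun n => (n : ℚ)))⁻¹ i j < 0 := by
  intro i j
  set Bq := B.map (fun n => (n : ℚ))
  have hoffq : ∀ a b, a ≠ b → 0 ≤ Bq a b := fun a b hab => Int.cast_nonneg (hoff a b hab)
  have hadj : ∀ a b, (SimpleGraph.fromRel (fun i j => B i j ≠ 0)).Adj a b → Bq a b ≠ 0 := by
    rintro a b ⟨-, hab | hba⟩
    · exact Int.cast_ne_zero.mpr hab
    · exact Int.cast_ne_zero.mpr (hsym.apply a b ▸ hba)
  have hdet : IsUnit Bq.det :=
    isUnit_iff_ne_zero.mpr (det_ne_zero_of_dotProduct_mulVec_ne_zero fun x hx => (hneg x hx).ne)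
  have hcol : Bq *ᵥ (Bq⁻¹ *ᵥ Pi.single j 1) = Pi.single j 1 := by
    rw [mulVec_mulVec, mul_nonsing_inv _ hdet, one_mulVec]
  have hcol_neg := neg_of_mulVec_nonneg hneg hoffq hconn hadj
    (by rw [hcol]; exact Pi.single_nonneg.mpr zero_le_one)
    (by rw [hcol]; exact Pi.single_ne_zero_iff.mpr one_ne_zero) i
  simpa [mulVec_single_one] using hcol_neg

/-- all entries of the inverse of a negative definite symmetric
integer matrix with nonnegative off-diagonal entries and connected graph
are strictly negative. -/
theorem stmt0 {J : Type*} [Fintype J] [DecidableEq J] [Nonempty J]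
    (B : Matrix J J ℤ)
    (hsym : B.IsSymm)
    (hneg : NegDef B)
    (hoff : ∀ i j, i ≠ j → 0 ≤ B i j)
    (hconn : (SimpleGraph.fromRel (fun i j => B i j ≠ 0)).Connected) :
    ∀ i j, (B.map (fun n => (n : ℚ)))⁻¹ i j < 0 :=
  stmt0_general B hsym hneg hoff hconn
end

section
/- Let L be a lattice with a negative definite symmetric bilinear form (·,·), with fixed basis {E_j}_{j∈J}. Define NE_Q := {x ∈ L⊗Q : (x, E_j) ≥ 0 for all j}. Fix l' ∈ L⊗Q. If l₁, l₂ are effective elements of L (nonnegative coordinates in the basis) with l' − l₁ ∈ NE_Q and l' − l₂ ∈ NE_Q, then for l := min{l₁, l₂} (coordinatewise minimum) one also has l' − l ∈ NE_Q. -/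
/-! If `l₁ j ≤ l₂ j`, write `l' - min{l₁, l₂} = (l' - l₁) + (l₁ - min{l₁, l₂})`. The second summand
is effective with vanishing `E_j`-coefficient, so its pairing with `E_j` only involves the entries
`(E_i, E_j) ≥ 0` with `i ≠ j`, and is therefore nonnegative. -/

open Matrix

variable {J : Type*}

section AntiNef

variable [Fintype J]

lemma bform_add_left (B : Matrix J J ℤ) (x y z : J → ℚ) :
    bform B (x + y) z = bform B x z + bform B y z :=
  add_dotProduct x y _

lemma bform_single_right [DecidableEq J] (B : Matrix J J ℤ) (x : J → ℚ) (j : J) :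
    bform B x (Pi.single j 1) = ∑ i, x i * (B i j : ℚ) := by
  simp [bform, Matrix.mulVec_single, dotProduct]

lemma bform_single_nonneg_of_nonneg_of_apply_eq_zero [DecidableEq J] {B : Matrix J J ℤ}
    (hoff : ∀ i j, i ≠ j → 0 ≤ B i j)
    {y : J → ℚ} (hy : 0 ≤ y) {j : J} (hyj : y j = 0) :
    0 ≤ bform B y (Pi.single j 1) := by
  rw [bform_single_right]
  refine Finset.sum_nonneg fun i _ => ?_
  rcases eq_or_ne i j with rfl | hij
  · simp [hyj]
  · exact mul_nonneg (hy i) (by exact_mod_cast hoff i j hij)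

lemma bform_sub_single_nonneg_of_le_of_apply_eq [DecidableEq J] {B : Matrix J J ℤ}
    (hoff : ∀ i j, i ≠ j → 0 ≤ B i j)
    {l' l m : J → ℚ} {j : J} (hml : m ≤ l) (hmj : m j = l j)
    (hl : 0 ≤ bform B (l' - l) (Pi.single j 1)) :
    0 ≤ bform B (l' - m) (Pi.single j 1) := by
  have hsplit : l' - m = (l' - l) + (l - m) := by abel
  have hlm : 0 ≤ bform B (l - m) (Pi.single j 1) :=
    bform_single_nonneg_of_nonneg_of_apply_eq_zero hoff (sub_nonneg.mpr hml) (by simp [hmj])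
  rw [hsplit, bform_add_left]
  exact add_nonneg hl hlm

end AntiNef

theorem stmt1_general {J : Type*} [Fintype J] [DecidableEq J]
    (B : Matrix J J ℤ)
    (hoff : ∀ i j, i ≠ j → 0 ≤ B i j)
    (l' l₁ l₂ : J → ℚ)
    (h1ne : inNE B (l' - l₁))
    (h2ne : inNE B (l' - l₂)) :
    inNE B (l' - fun j => min (l₁ j) (l₂ j)) := by
  intro j
  rcases le_total (l₁ j) (l₂ j) with h | h
  · exact bform_sub_single_nonneg_of_le_of_apply_eq hoff (fun i => min_le_left _ _)
      (min_eq_left h) (h1ne j)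
  · exact bform_sub_single_nonneg_of_le_of_apply_eq hoff (fun i => min_le_right _ _)
      (min_eq_right h) (h2ne j)

/-- if `l' - l₁` and `l' - l₂` are anti-nef with `l₁, l₂` effective
integral cycles, then `l' - min{l₁,l₂}` is anti-nef. -/
theorem stmt1 {J : Type*} [Fintype J] [DecidableEq J]
    (B : Matrix J J ℤ)
    (hsym : B.IsSymm)
    (hneg : NegDef B)
    (hoff : ∀ i j, i ≠ j → 0 ≤ B i j)
    (l' l₁ l₂ : J → ℚ)
    (h1lat : isLat l₁) (h1eff : Effective l₁) (h1ne : inNE B (l' - l₁))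
    (h2lat : isLat l₂) (h2eff : Effective l₂) (h2ne : inNE B (l' - l₂)) :
    inNE B (l' - fun j => min (l₁ j) (l₂ j)) :=
  stmt1_general B hoff l' l₁ l₂ h1ne h2ne
end

section
/- With L, (·,·), NE_Q as above and l' ∈ L', the generalized Laufer algorithm terminates: define x₀ = 0, and given x_i ∈ L effective, if l' − x_i ∈ NE_Q stop; otherwise choose j(i) with (l' − x_i, E_{j(i)}) < 0 and set x_{i+1} = x_i + E_{j(i)}. Then every x_i satisfies x_i ≤ l_{l'} (the minimal effective cycle with l' − l_{l'} ∈ NE_Q), the algorithm stops after finitely many steps at some x_t, and x_t = l_{l'}. -/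
/-!
Every `x_i` stays below any effective lattice cycle `y` with `l' - y ∈ NE_ℚ`: if `x_i` and `y`
agreed on the chosen coordinate `j`, then `(y - x_i, E_j) ≥ 0` because the off-diagonal entries
are nonnegative, so `(l' - x_i, E_j) = (l' - y, E_j) + (y - x_i, E_j) ≥ 0`, contradicting the
choice of `j`; integrality then gives `x_i + E_j ≤ y`. The coordinate sum of `x_i` is `i`, which
is bounded by that of `l_{l'}`, so the algorithm stops; the final `x_t` is then itself a competitor
in the definition of `l_{l'}`, whence `x_t = l_{l'}`.
-/

open Matrix

variable {J : Type*}

lemma bform_sub_left [Fintype J] (B : Matrix J J ℤ) (a b c : J → ℚ) :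
    bform B (a - b) c = bform B a c - bform B b c := by
  simp [bform, sub_dotProduct]

lemma bform_single_nonneg_of_effective [Fintype J] [DecidableEq J] {B : Matrix J J ℤ}
    (hoff : ∀ i j, i ≠ j → 0 ≤ B i j) {z : J → ℚ} (hz : Effective z) {j : J} (hzj : z j = 0) :
    0 ≤ bform B z (Pi.single j 1) := by
  rw [bform, mulVec_single, dotProduct]
  refine Finset.sum_nonneg fun k _ => ?_
  rcases eq_or_ne k j with rfl | hkj
  · simp [hzj]
  · have hBkj : (0 : ℚ) ≤ B k j := by exact_mod_cast hoff k j hkj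
    simpa using mul_nonneg (hz k) hBkj

lemma lt_of_bform_single_neg [Fintype J] [DecidableEq J] {B : Matrix J J ℤ}
    (hoff : ∀ i j, i ≠ j → 0 ≤ B i j) {l' x y : J → ℚ} (hne : inNE B (l' - y)) (hxy : x ≤ y)
    {j : J} (hj : bform B (l' - x) (Pi.single j 1) < 0) : x j < y j := by
  refine (hxy j).lt_of_ne fun hxyj => hj.not_ge ?_
  have hgap : 0 ≤ bform B (y - x) (Pi.single j 1) :=
    bform_single_nonneg_of_effective hoff (fun k => sub_nonneg.mpr (hxy k)) (sub_eq_zero.mpr hxyj.symm)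
  have hsplit : bform B (l' - x) (Pi.single j 1)
      = bform B (l' - y) (Pi.single j 1) + bform B (y - x) (Pi.single j 1) := by
    simp only [bform_sub_left]; ring
  rw [hsplit]
  exact add_nonneg (hne j) hgap

lemma isLat.add_single [DecidableEq J] {x : J → ℚ} (hx : isLat x) (j : J) :
    isLat (x + Pi.single j 1) := by
  intro k
  obtain ⟨m, hm⟩ := hx k
  rcases eq_or_ne k j with rfl | hkj
  · exact ⟨m + 1, by simp [hm]⟩
  · exact ⟨m, by simp [hkj, hm]⟩

lemma add_single_le_of_lt [DecidableEq J] {x y : J → ℚ} (hx : isLat x) (hy : isLat y)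
    (hxy : x ≤ y) {j : J} (hj : x j < y j) : x + Pi.single j 1 ≤ y := by
  intro k
  rcases eq_or_ne k j with rfl | hkj
  · obtain ⟨m, hm⟩ := hx k
    obtain ⟨n, hn⟩ := hy k
    rw [hm, hn] at hj
    have hmn : (m : ℚ) + 1 ≤ n := by exact_mod_cast Int.add_one_le_of_lt (by exact_mod_cast hj)
    simpa [hm, hn] using hmn
  · simpa [hkj] using hxy k

def IsLauferSeq [Fintype J] [DecidableEq J] (B : Matrix J J ℤ) (l' : J → ℚ)
    (x : ℕ → J → ℚ) : Prop :=
  x 0 = 0 ∧ ∀ i, ¬ inNE B (l' - x i) →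
    ∃ j, bform B (l' - x i) (Pi.single j 1) < 0 ∧ x (i + 1) = x i + Pi.single j 1

section IsLauferSeq

variable [Fintype J] [DecidableEq J] {B : Matrix J J ℤ} {l' : J → ℚ} {x : ℕ → J → ℚ}

lemma IsLauferSeq.sum_eq (hx : IsLauferSeq B l' x) :
    ∀ i, (∀ k < i, ¬ inNE B (l' - x k)) → ∑ j, x i j = i := by
  intro i
  induction i with
  | zero => simp [hx.1]
  | succ i ih =>
    intro hrun
    obtain ⟨j, -, hxj⟩ := hx.2 i (hrun i i.lt_succ_self)
    simp [hxj, Finset.sum_add_distrib, ih fun k hk => hrun k (hk.trans i.lt_succ_self)]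

lemma IsLauferSeq.le (hoff : ∀ i j, i ≠ j → 0 ≤ B i j) (hx : IsLauferSeq B l' x)
    {y : J → ℚ} (hy : isLat y) (hy0 : Effective y) (hne : inNE B (l' - y)) :
    ∀ i, (∀ k < i, ¬ inNE B (l' - x k)) → isLat (x i) ∧ Effective (x i) ∧ x i ≤ y := by
  intro i
  induction i with
  | zero => exact fun _ => by simpa [hx.1] using ⟨fun _ => ⟨0, by simp⟩, fun _ => le_rfl, hy0⟩
  | succ i ih =>
    intro hrun
    obtain ⟨hlat, heff, hle⟩ := ih fun k hk => hrun k (hk.trans i.lt_succ_self)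
    obtain ⟨j, hj, hxj⟩ := hx.2 i (hrun i i.lt_succ_self)
    have hnext : x i ≤ x (i + 1) := by
      rw [hxj]; exact le_add_of_nonneg_right (Pi.single_nonneg.mpr zero_le_one)
    refine ⟨hxj ▸ hlat.add_single j, fun k => (heff k).trans (hnext k), ?_⟩
    rw [hxj]
    exact add_single_le_of_lt hlat hy hle (lt_of_bform_single_neg hoff hne hle hj)

lemma IsLauferSeq.exists_stop (hoff : ∀ i j, i ≠ j → 0 ≤ B i j) (hx : IsLauferSeq B l' x)
    {y : J → ℚ} (hy : isLat y) (hy0 : Effective y) (hne : inNE B (l' - y)) :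
    ∃ t, inNE B (l' - x t) := by
  by_contra! hrun
  obtain ⟨N, hN⟩ := exists_nat_gt (∑ j, y j)
  have hsum := hx.sum_eq N fun k _ => hrun k
  have hle := (hx.le hoff hy hy0 hne N fun k _ => hrun k).2.2
  have : (N : ℚ) ≤ ∑ j, y j := hsum ▸ Finset.sum_le_sum fun j _ => hle j
  linarith

end IsLauferSeq

theorem stmt3_general {J : Type*} [Fintype J] [DecidableEq J]
    (B : Matrix J J ℤ)
    (hoff : ∀ i j, i ≠ j → 0 ≤ B i j)
    (l' : J → ℚ)
    -- `lmin` is the unique minimal effective cycle with `l' - lmin ∈ NE_ℚ`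
    (lmin : J → ℚ) (hlat : isLat lmin) (heff : Effective lmin)
    (hne : inNE B (l' - lmin))
    (hmin : ∀ y : J → ℚ, isLat y → Effective y → inNE B (l' - y) → lmin ≤ y)
    -- the computation sequence
    (x : ℕ → (J → ℚ)) (hx0 : x 0 = 0)
    (hstep : ∀ i, ¬ inNE B (l' - x i) →
      ∃ j, bform B (l' - x i) (Pi.single j 1) < 0 ∧ x (i + 1) = x i + Pi.single j 1) :
    (∀ i, (∀ k < i, ¬ inNE B (l' - x k)) → x i ≤ lmin) ∧
    ∃ t, (∀ k < t, ¬ inNE B (l' - x k)) ∧ inNE B (l' - x t) ∧ x t = lmin := by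
  classical
  have hx : IsLauferSeq B l' x := ⟨hx0, hstep⟩
  have hbelow := hx.le hoff hlat heff hne
  have hstop := hx.exists_stop hoff hlat heff hne
  have hrun : ∀ k < Nat.find hstop, ¬ inNE B (l' - x k) := fun k hk => Nat.find_min hstop hk
  obtain ⟨hlat_t, heff_t, hle_t⟩ := hbelow _ hrun
  exact ⟨fun i hi => (hbelow i hi).2.2, Nat.find hstop, hrun, Nat.find_spec hstop,
    le_antisymm hle_t (hmin _ hlat_t heff_t (Nat.find_spec hstop))⟩

/-- the generalized Laufer algorithm stays below `l_{l'}`,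
terminates, and ends exactly at `l_{l'}`. -/
theorem stmt3 {J : Type*} [Fintype J] [DecidableEq J]
    (B : Matrix J J ℤ)
    (hsym : B.IsSymm)
    (hneg : NegDef B)
    (hoff : ∀ i j, i ≠ j → 0 ≤ B i j)
    (l' : J → ℚ) (hl' : isDual B l')
    -- `lmin` is the unique minimal effective cycle with `l' - lmin ∈ NE_ℚ`
    (lmin : J → ℚ) (hlat : isLat lmin) (heff : Effective lmin)
    (hne : inNE B (l' - lmin))
    (hmin : ∀ y : J → ℚ, isLat y → Effective y → inNE B (l' - y) → lmin ≤ y)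
    -- the computation sequence
    (x : ℕ → (J → ℚ)) (hx0 : x 0 = 0)
    (hstep : ∀ i, ¬ inNE B (l' - x i) →
      ∃ j, bform B (l' - x i) (Pi.single j 1) < 0 ∧ x (i + 1) = x i + Pi.single j 1) :
    (∀ i, (∀ k < i, ¬ inNE B (l' - x k)) → x i ≤ lmin) ∧
    ∃ t, (∀ k < t, ¬ inNE B (l' - x k)) ∧ inNE B (l' - x t) ∧ x t = lmin :=
  stmt3_general B hoff l' lmin hlat heff hne hmin x hx0 hstep
end

section
/- Let (X,0) be a rational surface singularity (i.e., χ(l) > 0 for all l > 0 in L, where χ(l) = −(l, l+K)/2). Then for any effective cycle l > 0 there exists a component E_j of the support of l with (E_j, l + K) < 0. -/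
open Matrix

variable {J : Type*}

theorem Matrix.exists_pos_and_neg_of_dotProduct_neg {ι R : Type*} [Fintype ι]
    [CommRing R] [LinearOrder R] [IsStrictOrderedRing R] {x y : ι → R}
    (hx : ∀ i, 0 ≤ x i) (hxy : x ⬝ᵥ y < 0) : ∃ i, 0 < x i ∧ y i < 0 := by
  obtain ⟨i, -, hi⟩ := Finset.exists_lt_of_sum_lt (f := fun i => x i * y i) (g := 0)
    (by simpa [dotProduct] using hxy)
  have hy : y i < 0 := neg_of_mul_neg_right hi (hx i)
  exact ⟨i, pos_of_mul_neg_left hi hy.le, hy⟩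

theorem bform_single_one_left [Fintype J] [DecidableEq J] (B : Matrix J J ℤ) (j : J)
    (v : J → ℚ) : bform B (Pi.single j 1) v = (B.map (fun n => (n : ℚ))).mulVec v j := by
  simp [bform]

theorem bform_self_add_neg_of_chi_pos [Fintype J] {B : Matrix J J ℤ} {K l : J → ℚ}
    (h : 0 < chi B K l) : bform B l (l + K) < 0 := by
  unfold chi at h
  linarith

theorem stmt10_general {J : Type*} [Fintype J] [DecidableEq J]
    (B : Matrix J J ℤ)
    (K : J → ℚ)
    -- rationality: `χ(l) > 0` for all `l ∈ L`, `l > 0`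
    (hrat : ∀ l : J → ℚ, isLat l → Effective l → l ≠ 0 → 0 < chi B K l) :
    ∀ l : J → ℚ, isLat l → Effective l → l ≠ 0 →
      ∃ j, 0 < l j ∧ bform B (Pi.single j 1) (l + K) < 0 := by
  intro l hlat heff hne
  have hform : l ⬝ᵥ (B.map (fun n => (n : ℚ))).mulVec (l + K) < 0 :=
    bform_self_add_neg_of_chi_pos (hrat l hlat heff hne)
  obtain ⟨j, hlj, hj⟩ := exists_pos_and_neg_of_dotProduct_neg heff hform
  exact ⟨j, hlj, by rwa [bform_single_one_left]⟩

/-- for a rational singularity, every effective cycle `l > 0` has a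
component `E_j` of its support with `(E_j, l + K) < 0`. -/
theorem stmt10 {J : Type*} [Fintype J] [DecidableEq J]
    (B : Matrix J J ℤ)
    (hsym : B.IsSymm)
    (hneg : NegDef B)
    (K : J → ℚ) (hKdual : isDual B K)
    (hK : ∀ j, bform B K (Pi.single j 1) = -(B j j : ℚ) - 2)
    -- rationality: `χ(l) > 0` for all `l ∈ L`, `l > 0`
    (hrat : ∀ l : J → ℚ, isLat l → Effective l → l ≠ 0 → 0 < chi B K l) :
    ∀ l : J → ℚ, isLat l → Effective l → l ≠ 0 →
      ∃ j, 0 < l j ∧ bform B (Pi.single j 1) (l + K) < 0 :=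
  stmt10_general B K hrat
end
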